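/- The sliding block code π intertwines the Thue-Morse substitution H (0→01, 1→10) with the Feigenbaum substitution H_feig (0→11, 1→10): H_feig ∘ π = π ∘ H. In particular π maps both Thue-Morse fixed points ρ₀, ρ₁ to the kneading sequence ρ, the fixed point of H_feig starting with 1. -/

import Mathlib

open Filter Topology MeasureTheory

/-- The left shift on the full 2-shift `Σ = {0,1}^ℕ`. -/
def shift (x : ℕ → Bool) : ℕ → Bool := fun n => x (n + 1)

/-- The Thue–Morse substitution `H : 0 → 01, 1 → 10`, acting on sequences. -/
def subH (x : ℕ → Bool) : ℕ → Bool :=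
  fun n => if n % 2 = 0 then x (n / 2) else !x (n / 2)

/-- The Thue–Morse sequence: `tm n` is the parity of the number of 1s in
the binary expansion of `n`. -/
def tm (n : ℕ) : Bool := (Nat.digits 2 n).count 1 % 2 == 1

/-- The fixed point of `subH` starting with 0. -/
def rho0 : ℕ → Bool := tm

/-- The fixed point of `subH` starting with 1. -/
def rho1 : ℕ → Bool := fun n => !tm n

/-- `rhoB b` is the fixed point of `subH` starting with digit `b`. -/
def rhoB : Bool → ℕ → Bool
  | false => rho0
  | true => rho1

/-- The digit-flipping involution. -/
def flipSeq (x : ℕ → Bool) : ℕ → Bool := fun n => !x n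

/-- Prepend a digit to a sequence. -/
def consTM (a : Bool) (x : ℕ → Bool) : ℕ → Bool
  | 0 => a
  | n + 1 => x n

/-- The Thue–Morse subshift: the closure of the shift orbit of `rho0`. -/
def TMK : Set (ℕ → Bool) := closure {y | ∃ n, y = shift^[n] rho0}

/-- The renormalization operator `𝓡V = V ∘ σ ∘ H + V ∘ H`. -/
def RenOp (V : (ℕ → Bool) → ℝ) : (ℕ → Bool) → ℝ :=
  fun x => V (shift (subH x)) + V (subH x)

/-- The Birkhoff sum `S_k V = ∑_{i<k} V ∘ σⁱ`. -/
def birkhoff (V : (ℕ → Bool) → ℝ) (k : ℕ) (x : ℕ → Bool) : ℝ :=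
  ∑ i ∈ Finset.range k, V (shift^[i] x)

/-- The potential `U_c`: value `c` on `[01]`, `-c` on `[10]`, `0` on `[00] ∪ [11]`. -/
def Upot (c : ℝ) (x : ℕ → Bool) : ℝ :=
  if x 0 = false ∧ x 1 = true then c
  else if x 0 = true ∧ x 1 = false then -c else 0

/-- The sliding block code `π(x)_k = 1` iff `x_k ≠ x_{k+1}`. -/
def piTM (x : ℕ → Bool) : ℕ → Bool := fun n => x n != x (n + 1)

/-- The Feigenbaum substitution `0 → 11, 1 → 10`, acting on sequences. -/
def subHfeig (x : ℕ → Bool) : ℕ → Bool :=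
  fun n => if n % 2 = 0 then true else !x (n / 2)

/-! Writing `H x = x₀ x̄₀ x₁ x̄₁ …`, the letter of `π (H x)` at `2m` compares `x_m` with `x̄_m`, so it
is `1`, and the one at `2m+1` compares `x̄_m` with `x_{m+1}`, so it is the negation of `(π x)_m`:
this is `H_feig (π x)`. A fixed point of `H_feig` is determined letter by letter (even letters are
`1`, the letter at `2m+1` negates the one at `m`), so `π ρ₀ = ρ`; and `π ρ₁ = π ρ₀` because `π` is
blind to the flip `ρ₁ = ρ̄₀`. -/

open Function

lemma subH_two_mul (x : ℕ → Bool) (m : ℕ) : subH x (2 * m) = x m := by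
  simp [subH]

lemma subH_two_mul_add_one (x : ℕ → Bool) (m : ℕ) : subH x (2 * m + 1) = !x m := by
  simp [subH, Nat.add_mod, show (2 * m + 1) / 2 = m by omega]

lemma subHfeig_two_mul (x : ℕ → Bool) (m : ℕ) : subHfeig x (2 * m) = true := by
  simp [subHfeig]

lemma subHfeig_two_mul_add_one (x : ℕ → Bool) (m : ℕ) : subHfeig x (2 * m + 1) = !x m := by
  simp [subHfeig, Nat.add_mod, show (2 * m + 1) / 2 = m by omega]

lemma tm_two_mul (m : ℕ) : tm (2 * m) = tm m := by
  rcases Nat.eq_zero_or_pos m with rfl | hm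
  · rfl
  · simp [tm, Nat.digits_def' one_lt_two (by omega : 0 < 2 * m)]

lemma tm_two_mul_add_one (m : ℕ) : tm (2 * m + 1) = !tm m := by
  rw [tm, tm, Nat.digits_def' one_lt_two (by omega), show (2 * m + 1) % 2 = 1 by omega,
    show (2 * m + 1) / 2 = m by omega, List.count_cons_self]
  rcases Nat.mod_two_eq_zero_or_one ((Nat.digits 2 m).count 1) with h | h <;>
    simp [Nat.add_mod, h]

lemma subH_rho0 : subH rho0 = rho0 := by
  funext n
  obtain ⟨m, rfl | rfl⟩ := Nat.even_or_odd' n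
  · rw [subH_two_mul, rho0, tm_two_mul]
  · rw [subH_two_mul_add_one, rho0, tm_two_mul_add_one]

lemma subHfeig_piTM (x : ℕ → Bool) : subHfeig (piTM x) = piTM (subH x) := by
  funext n
  obtain ⟨m, rfl | rfl⟩ := Nat.even_or_odd' n
  · rw [subHfeig_two_mul, piTM, subH_two_mul, subH_two_mul_add_one]
    cases x m <;> rfl
  · simp only [subHfeig_two_mul_add_one, piTM]
    rw [subH_two_mul_add_one, show 2 * m + 1 + 1 = 2 * (m + 1) by ring, subH_two_mul]
    cases x m <;> cases x (m + 1) <;> rfl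

lemma eq_of_isFixedPt_subHfeig {f g : ℕ → Bool} (hf : IsFixedPt subHfeig f)
    (hg : IsFixedPt subHfeig g) : f = g := by
  funext n
  induction n using Nat.strong_induction_on with
  | _ n ih =>
    rw [← hf.eq, ← hg.eq]
    obtain ⟨m, rfl | rfl⟩ := Nat.even_or_odd' n
    · rw [subHfeig_two_mul, subHfeig_two_mul]
    · rw [subHfeig_two_mul_add_one, subHfeig_two_mul_add_one, ih m (by omega)]

lemma piTM_flipSeq (x : ℕ → Bool) : piTM (flipSeq x) = piTM x := by
  funext n
  simp only [piTM, flipSeq]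
  cases x n <;> cases x (n + 1) <;> rfl

/-- `π` intertwines the Thue–Morse substitution with the Feigenbaum
substitution, `H_feig ∘ π = π ∘ H`, and maps both Thue–Morse fixed points to the
kneading sequence `ρ`, the fixed point of `H_feig` starting with `1`. -/
theorem stmt19 :
    subHfeig ∘ piTM = piTM ∘ subH ∧
    ∀ rho : ℕ → Bool, rho 0 = true → subHfeig rho = rho →
      piTM rho0 = rho ∧ piTM rho1 = rho := by
  refine ⟨funext subHfeig_piTM, fun rho _ hrho => ?_⟩
  have hfix : IsFixedPt subHfeig (piTM rho0) := by
    rw [IsFixedPt, subHfeig_piTM, subH_rho0]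
  have h0 : piTM rho0 = rho := eq_of_isFixedPt_subHfeig hfix hrho
  have h1 : piTM rho1 = piTM rho0 := piTM_flipSeq rho0
  exact ⟨h0, h1.trans h0⟩
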